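/- arXiv:1406.7469 — 3 statements merged into one kernel-verified Lean document; each statement's English description precedes it below -/
import Mathlib

section
/- Under the stated assumptions, for all complex numbers x, y with 0 < |x| ≤ 1 and 0 < |y| ≤ 1, all the series below converge absolutely and the functional equation −R(x,y)·π(x,y) = Σ_{(k,ℓ)∈E} R^{(k,ℓ)}(x,y)·π_{k,ℓ}·x^k y^ℓ + Σ_{ℓ=0}^{J⁻−1} R^{S'_ℓ}(x,y)·π^{S'_ℓ}(x,y) + Σ_{k=0}^{I⁻−1} R^{S''_k}(x,y)·π^{S''_k}(x,y) holds. -/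
/-!
Multiply the stationarity equation `π(q') = Σ_q π(q) p^{C(q)}(q' − q)` by `x^{q'₁} y^{q'₂}` and
sum over `q'`. Since `|x|, |y| ≤ 1` and no jump leaves the quarter plane, the double series
`Σ_{q,q'} π(q) p^{C(q)}(q' − q) x^{q'₁} y^{q'₂}` converges absolutely (its mass is at most 1),
so it may be summed in either order. Summing over `q'` first gives
`Σ_q π(q) x^{q₁} y^{q₂} (1 + R^{C(q)}(x,y))`, summing over `q` first gives
`Σ_q π(q) x^{q₁} y^{q₂}`; hence `Σ_q R^{C(q)}(x,y) π(q) x^{q₁} y^{q₂} = 0`, and grouping the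
states by class yields the functional equation.
-/

noncomputable section
open scoped Classical

/-- The interior class `S = {(i,j) : i ≥ I⁻, j ≥ J⁻}`. -/
def Sclass (Im Jm : ℕ) : Set (ℕ × ℕ) := {p | Im ≤ p.1 ∧ Jm ≤ p.2}

/-- The horizontal classes: `S'_ℓ = {(i,ℓ) : i ≥ I⁻}` for `1 ≤ ℓ ≤ J⁻ − 1`, and
`S'_0 = {(i,0) : i ≥ I⁰}`. -/
def Shoriz (Im I0 : ℕ) (l : ℕ) : Set (ℕ × ℕ) :=
  if l = 0 then {p | p.2 = 0 ∧ I0 ≤ p.1} else {p | p.2 = l ∧ Im ≤ p.1}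

/-- The vertical classes: `S''_k = {(k,j) : j ≥ J⁻}` for `1 ≤ k ≤ I⁻ − 1`, and
`S''_0 = {(0,j) : j ≥ J⁰}`. -/
def Svert (Jm J0 : ℕ) (k : ℕ) : Set (ℕ × ℕ) :=
  if k = 0 then {p | p.1 = 0 ∧ J0 ≤ p.2} else {p | p.1 = k ∧ Jm ≤ p.2}

/-- The (finite) set of isolated points
`E = ({0,…,I⁻−1} × {0,…,J⁻−1}) ∪ {(i,0) : I⁻ ≤ i ≤ I⁰−1} ∪ {(0,j) : J⁻ ≤ j ≤ J⁰−1}`. -/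
def EFin (Im Jm I0 J0 : ℕ) : Finset (ℕ × ℕ) :=
  (Finset.range Im ×ˢ Finset.range Jm)
    ∪ (Finset.Ico Im I0).image (fun i => (i, 0))
    ∪ (Finset.Ico Jm J0).image (fun j => ((0 : ℕ), j))

/-- Index type enumerating all the homogeneity classes: the interior class,
the `J⁻` horizontal classes, the `I⁻` vertical classes, and one singleton class
for each isolated point of `E`. -/
def Idx (Im Jm I0 J0 : ℕ) : Type :=
  Unit ⊕ Fin Jm ⊕ Fin Im ⊕ {e // e ∈ EFin Im Jm I0 J0}

/-- The class associated with each index. -/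
def classOf (Im Jm I0 J0 : ℕ) : Idx Im Jm I0 J0 → Set (ℕ × ℕ)
  | Sum.inl _ => Sclass Im Jm
  | Sum.inr (Sum.inl l) => Shoriz Im I0 l
  | Sum.inr (Sum.inr (Sum.inl k)) => Svert Jm J0 k
  | Sum.inr (Sum.inr (Sum.inr e)) => {e.1}

/-- The jump from state `q` to state `q'`, an element of ℤ². -/
def jumpOf (q q' : ℕ × ℕ) : ℤ × ℤ := ((q'.1 : ℤ) - (q.1 : ℤ), (q'.2 : ℤ) - (q.2 : ℤ))

/-- Generating function `R^C(x,y) = −1 + Σ_{(m,n)} p^C(m,n)·x^m y^n` of a jump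
distribution (the sum is a finite sum since `p` is finitely supported). -/
def Rgen (p : ℤ × ℤ → ℝ) (x y : ℂ) : ℂ :=
  -1 + ∑' m : ℤ × ℤ, (p m : ℂ) * x ^ m.1 * y ^ m.2

/-- Generating function `Σ_{(i,j)∈C} π(i,j)·x^i y^j` of the stationary
probabilities restricted to a class `C ⊆ ℤ₊²`. -/
def piGen (π : ℕ × ℕ → ℝ) (C : Set (ℕ × ℕ)) (x y : ℂ) : ℂ :=
  ∑' q : ℕ × ℕ, (if q ∈ C then (π q : ℂ) else 0) * x ^ q.1 * y ^ q.2

instance (Im Jm I0 J0 : ℕ) : Fintype (Idx Im Jm I0 J0) := by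
  unfold Idx; infer_instance

theorem mem_EFin_iff {Im Jm I0 J0 : ℕ} {e : ℕ × ℕ} :
    e ∈ EFin Im Jm I0 J0 ↔ (e.1 < Im ∧ e.2 < Jm) ∨ (Im ≤ e.1 ∧ e.1 < I0 ∧ e.2 = 0) ∨
      (e.1 = 0 ∧ Jm ≤ e.2 ∧ e.2 < J0) := by
  obtain ⟨a, b⟩ := e
  simp only [EFin, Finset.mem_union, Finset.mem_product, Finset.mem_range, Finset.mem_image,
    Finset.mem_Ico, Prod.mk.injEq]
  constructor
  · rintro ((h | ⟨i, hi, rfl, rfl⟩) | ⟨j, hj, rfl, rfl⟩) <;> omega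
  · rintro (h | ⟨h1, h2, rfl⟩ | ⟨rfl, h2, h3⟩)
    exacts [.inl (.inl h), .inl (.inr ⟨a, ⟨h1, h2⟩, rfl, rfl⟩), .inr ⟨b, ⟨h2, h3⟩, rfl, rfl⟩]

theorem Idx.eq_of_mem_classOf {Im Jm I0 J0 : ℕ} (hIm : 1 ≤ Im) (hJm : 1 ≤ Jm)
    (hI0 : Im ≤ I0) (hJ0 : Jm ≤ J0) {q : ℕ × ℕ} {i i' : Idx Im Jm I0 J0}
    (h : q ∈ classOf Im Jm I0 J0 i) (h' : q ∈ classOf Im Jm I0 J0 i') : i = i' := by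
  rcases i with ⟨⟨⟩⟩ | ⟨l, hl⟩ | ⟨k, hk⟩ | ⟨e, he⟩ <;>
    rcases i' with ⟨⟨⟩⟩ | ⟨l', hl'⟩ | ⟨k', hk'⟩ | ⟨e', he'⟩ <;>
    (try have hE := mem_EFin_iff.mp he) <;> (try have hE' := mem_EFin_iff.mp he') <;>
    simp only [classOf, Sclass, Shoriz, Svert, Set.mem_singleton_iff] at h h' <;>
    (try subst h) <;> (try subst h') <;> (try split_ifs at h) <;> (try split_ifs at h') <;>
    (try simp only [Set.mem_ofPred_eq] at *) <;>
    first | rfl | (exfalso; omega) | (congr; omega)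

theorem Idx.sum_univ {Im Jm I0 J0 : ℕ} {M : Type*} [AddCommMonoid M] (g : Idx Im Jm I0 J0 → M) :
    ∑ i, g i = g (Sum.inl ()) + ∑ l : Fin Jm, g (Sum.inr (Sum.inl l))
      + ∑ k : Fin Im, g (Sum.inr (Sum.inr (Sum.inl k)))
      + ∑ e ∈ (EFin Im Jm I0 J0).attach, g (Sum.inr (Sum.inr (Sum.inr e))) := by
  let g' : Unit ⊕ Fin Jm ⊕ Fin Im ⊕ {e // e ∈ EFin Im Jm I0 J0} → M := g
  change ∑ i, g' i = _
  rw [Fintype.sum_sum_type, Fintype.sum_sum_type, Fintype.sum_sum_type, Fintype.sum_unique,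
    Finset.univ_eq_attach, add_assoc, add_assoc]

theorem piGen_singleton (π : ℕ × ℕ → ℝ) (e : ℕ × ℕ) (x y : ℂ) :
    piGen π {e} x y = π e * x ^ e.1 * y ^ e.2 := by
  rw [piGen, tsum_eq_single e fun q hq => by simp [hq]]
  simp

theorem summable_norm_jump_series {p : ℤ × ℤ → ℝ} (hp : (Function.support p).Finite) (x y : ℂ) :
    Summable fun m : ℤ × ℤ => ‖(p m : ℂ) * x ^ m.1 * y ^ m.2‖ :=
  summable_of_ne_finset_zero (s := hp.toFinset) fun m hm => by
    simp [Function.notMem_support.mp (mt hp.mem_toFinset.mpr hm)]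

theorem summable_norm_piGen_series {π : ℕ × ℕ → ℝ} (hπ0 : ∀ q, 0 ≤ π q) (hπ : Summable π)
    {x y : ℂ} (hx : ‖x‖ ≤ 1) (hy : ‖y‖ ≤ 1) (C : Set (ℕ × ℕ)) :
    Summable fun q : ℕ × ℕ => ‖(if q ∈ C then (π q : ℂ) else 0) * x ^ q.1 * y ^ q.2‖ := by
  refine hπ.of_nonneg_of_le (fun q => norm_nonneg _) fun q => ?_
  split_ifs
  · rw [norm_mul, norm_mul, norm_pow, norm_pow, Complex.norm_real, Real.norm_of_nonneg (hπ0 q),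
      mul_assoc]
    exact mul_le_of_le_one_right (hπ0 q)
      (mul_le_one₀ (pow_le_one₀ (norm_nonneg _) hx) (by positivity) (pow_le_one₀ (norm_nonneg _) hy))
  · simpa using hπ0 q

theorem jumpOf_injective (q : ℕ × ℕ) : Function.Injective (jumpOf q) := by
  intro a b h
  simp only [jumpOf, Prod.mk.injEq] at h
  ext <;> omega

theorem hasSum_comp_jumpOf_iff {M : Type*} [AddCommMonoid M] [TopologicalSpace M]
    (q : ℕ × ℕ) {g : ℤ × ℤ → M} (hg : ∀ m, g m ≠ 0 → 0 ≤ q.1 + m.1 ∧ 0 ≤ q.2 + m.2) {s : M} :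
    HasSum (fun q' => g (jumpOf q q')) s ↔ HasSum g s := by
  refine (jumpOf_injective q).hasSum_iff fun m hm => ?_
  by_contra hgm
  obtain ⟨h1, h2⟩ := hg m hgm
  exact hm ⟨((q.1 + m.1).toNat, (q.2 + m.2).toNat), by ext <;> simp [jumpOf] <;> omega⟩

theorem pow_mul_zpow_sub {G₀ : Type*} [GroupWithZero G₀] {x : G₀} (hx : x ≠ 0) (a b : ℕ) :
    x ^ a * x ^ ((b : ℤ) - a) = x ^ b := by
  rw [← zpow_natCast, ← zpow_add₀ hx, add_sub_cancel, zpow_natCast]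

theorem hasSum_comp_jumpOf_mul_monomial {p : ℤ × ℤ → ℝ} {q : ℕ × ℕ}
    (hstay : ∀ m, p m ≠ 0 → 0 ≤ (q.1 : ℤ) + m.1 ∧ 0 ≤ (q.2 : ℤ) + m.2)
    (hp : (Function.support p).Finite) {x y : ℂ} (hx : x ≠ 0) (hy : y ≠ 0) :
    HasSum (fun q' : ℕ × ℕ => (p (jumpOf q q') : ℂ) * x ^ q'.1 * y ^ q'.2)
      (x ^ q.1 * y ^ q.2 * (1 + Rgen p x y)) := by
  have hR : HasSum (fun m : ℤ × ℤ => (p m : ℂ) * x ^ m.1 * y ^ m.2) (1 + Rgen p x y) := by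
    rw [Rgen, add_neg_cancel_left]
    exact (summable_norm_jump_series hp x y).of_norm.hasSum
  have hR' := ((hasSum_comp_jumpOf_iff q fun m hm => hstay m fun h => by simp [h] at hm).2
    hR).mul_left (x ^ q.1 * y ^ q.2)
  refine hR'.congr_fun fun q' => ?_
  simp only [jumpOf]
  rw [← pow_mul_zpow_sub hx q.1 q'.1, ← pow_mul_zpow_sub hy q.2 q'.2]
  ring

theorem summable_flow {P : ℕ × ℕ → ℤ × ℤ → ℝ} (hP0 : ∀ q m, 0 ≤ P q m)
    (hP1 : ∀ q, HasSum (fun q' => P q (jumpOf q q')) 1)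
    {π : ℕ × ℕ → ℝ} (hπ0 : ∀ q, 0 ≤ π q) (hπ : Summable π)
    {x y : ℂ} (hx : ‖x‖ ≤ 1) (hy : ‖y‖ ≤ 1) :
    Summable fun z : (ℕ × ℕ) × (ℕ × ℕ) =>
      (π z.1 * P z.1 (jumpOf z.1 z.2) : ℂ) * x ^ z.2.1 * y ^ z.2.2 := by
  have hmass : Summable fun z : (ℕ × ℕ) × (ℕ × ℕ) => π z.1 * P z.1 (jumpOf z.1 z.2) := by
    refine (summable_prod_of_nonneg fun z => mul_nonneg (hπ0 _) (hP0 _ _)).2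
      ⟨fun q => ((hP1 q).mul_left (π q)).summable, ?_⟩
    simpa only [tsum_mul_left, (hP1 _).tsum_eq, mul_one] using hπ
  refine hmass.of_norm_bounded fun z => ?_
  simp only [norm_mul, norm_pow, Complex.norm_real, Real.norm_of_nonneg (hπ0 _),
    Real.norm_of_nonneg (hP0 _ _), mul_assoc]
  rw [← mul_assoc]
  exact mul_le_of_le_one_right (mul_nonneg (hπ0 _) (hP0 _ _))
    (mul_le_one₀ (pow_le_one₀ (norm_nonneg _) hx) (by positivity) (pow_le_one₀ (norm_nonneg _) hy))

theorem stationary_hasSum_Rgen_mul_zero {P : ℕ × ℕ → ℤ × ℤ → ℝ} (hP0 : ∀ q m, 0 ≤ P q m)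
    (hPfin : ∀ q, (Function.support (P q)).Finite) (hP1 : ∀ q, HasSum (P q) 1)
    (hstay : ∀ q m, P q m ≠ 0 → 0 ≤ (q.1 : ℤ) + m.1 ∧ 0 ≤ (q.2 : ℤ) + m.2)
    {π : ℕ × ℕ → ℝ} (hπ0 : ∀ q, 0 ≤ π q) (hπ : Summable π)
    (hstat : ∀ q', HasSum (fun q => π q * P q (jumpOf q q')) (π q'))
    {x y : ℂ} (hx0 : x ≠ 0) (hy0 : y ≠ 0) (hx1 : ‖x‖ ≤ 1) (hy1 : ‖y‖ ≤ 1) :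
    HasSum (fun q : ℕ × ℕ => Rgen (P q) x y * (π q * x ^ q.1 * y ^ q.2)) 0 := by
  obtain ⟨T, hflow⟩ := summable_flow hP0
    (fun q => (hasSum_comp_jumpOf_iff q (hstay q)).2 (hP1 q)) hπ0 hπ hx1 hy1
  have hout : HasSum (fun q : ℕ × ℕ => π q * x ^ q.1 * y ^ q.2 * (1 + Rgen (P q) x y)) T := by
    refine hflow.prod_fiberwise fun q => ?_
    have := (hasSum_comp_jumpOf_mul_monomial (hstay q) (hPfin q) hx0 hy0).mul_left (π q : ℂ)
    rw [← mul_assoc, ← mul_assoc] at this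
    exact this.congr_fun fun q' => by ring
  have hin : HasSum (fun q' : ℕ × ℕ => π q' * x ^ q'.1 * y ^ q'.2) T := by
    refine ((Equiv.prodComm _ _).hasSum_iff.2 hflow).prod_fiberwise fun q' => ?_
    have := (Complex.hasSum_ofReal.2 (hstat q')).mul_right (x ^ q'.1 * y ^ q'.2)
    rw [← mul_assoc] at this
    exact this.congr_fun fun q => by
      simp only [Function.comp_apply, Equiv.prodComm_apply, Prod.swap_prod_mk, Complex.ofReal_mul]
      ring
  have hdiff := hout.sub hin
  rw [sub_self] at hdiff
  exact hdiff.congr_fun fun q => by ring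

theorem sum_mul_piGen_eq_tsum {ι : Type*} [Fintype ι] (c : ι → Set (ℕ × ℕ)) (cl : ℕ × ℕ → ι)
    (hcl : ∀ q i, q ∈ c i ↔ cl q = i) (π : ℕ × ℕ → ℝ) {x y : ℂ}
    (hs : ∀ i, Summable fun q : ℕ × ℕ => (if q ∈ c i then (π q : ℂ) else 0) * x ^ q.1 * y ^ q.2)
    (g : ι → ℂ) :
    ∑ i, g i * piGen π (c i) x y = ∑' q : ℕ × ℕ, g (cl q) * (π q * x ^ q.1 * y ^ q.2) := by
  simp_rw [piGen, ← tsum_mul_left]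
  rw [← Summable.tsum_finsetSum fun i _ => (hs i).mul_left (g i)]
  refine tsum_congr fun q => ?_
  simp only [hcl q, ite_mul, zero_mul, mul_ite, mul_zero, Finset.sum_ite_eq, Finset.mem_univ,
    if_true]

theorem functional_equation_general (Im Jm I0 J0 : ℕ)
    (hIm : 1 ≤ Im) (hJm : 1 ≤ Jm) (hI0 : Im ≤ I0) (hJ0 : Jm ≤ J0)
    -- the jump distributions, one for each class
    (p : Idx Im Jm I0 J0 → ℤ × ℤ → ℝ)
    (hp0 : ∀ i m, 0 ≤ p i m)
    (hpfin : ∀ i, (Function.support (p i)).Finite)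
    (hpsum : ∀ i, HasSum (p i) 1)
    -- jumps from a state of a class stay in the quarter plane
    (hpres : ∀ i, ∀ q ∈ classOf Im Jm I0 J0 i, ∀ m : ℤ × ℤ, 0 < p i m →
      0 ≤ (q.1 : ℤ) + m.1 ∧ 0 ≤ (q.2 : ℤ) + m.2)
    -- `cl q` is the homogeneity class containing the state `q`
    (cl : ℕ × ℕ → Idx Im Jm I0 J0) (hcl : ∀ q, q ∈ classOf Im Jm I0 J0 (cl q))
    -- the stationary distribution of the kernel `K(q,q') = p^{C(q)}(q' − q)`
    (π : ℕ × ℕ → ℝ) (hπ0 : ∀ q, 0 ≤ π q) (hπsum : HasSum π 1)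
    (hstat : ∀ q' : ℕ × ℕ,
      HasSum (fun q : ℕ × ℕ => π q * p (cl q) (jumpOf q q')) (π q'))
    (x y : ℂ) (hx0 : 0 < ‖x‖) (hx1 : ‖x‖ ≤ 1) (hy0 : 0 < ‖y‖) (hy1 : ‖y‖ ≤ 1) :
    -- absolute convergence of all the series involved
    (∀ i, Summable (fun m : ℤ × ℤ => ‖(p i m : ℂ) * x ^ m.1 * y ^ m.2‖)) ∧
    (∀ C : Set (ℕ × ℕ),
      Summable (fun q : ℕ × ℕ => ‖(if q ∈ C then (π q : ℂ) else 0) * x ^ q.1 * y ^ q.2‖)) ∧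
    -- the functional equation
    -(Rgen (p (Sum.inl ())) x y) * piGen π (Sclass Im Jm) x y =
      (∑ e ∈ (EFin Im Jm I0 J0).attach,
        Rgen (p (Sum.inr (Sum.inr (Sum.inr e)))) x y
          * ((π e.1 : ℂ) * x ^ (e.1.1 : ℕ) * y ^ (e.1.2 : ℕ)))
      + (∑ l : Fin Jm,
        Rgen (p (Sum.inr (Sum.inl l))) x y * piGen π (Shoriz Im I0 (l : ℕ)) x y)
      + (∑ k : Fin Im,
        Rgen (p (Sum.inr (Sum.inr (Sum.inl k)))) x y * piGen π (Svert Jm J0 (k : ℕ)) x y) := by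
  have hseries := summable_norm_piGen_series hπ0 hπsum.summable hx1 hy1
  refine ⟨fun i => summable_norm_jump_series (hpfin i) x y, hseries, ?_⟩
  have hbalance := stationary_hasSum_Rgen_mul_zero (P := fun q => p (cl q)) (fun q => hp0 _)
    (fun q => hpfin _) (fun q => hpsum _)
    (fun q m hm => hpres _ q (hcl q) m ((hp0 _ _).lt_of_ne' hm)) hπ0 hπsum.summable hstat
    (norm_pos_iff.mp hx0) (norm_pos_iff.mp hy0) hx1 hy1
  have hsplit := sum_mul_piGen_eq_tsum (classOf Im Jm I0 J0) cl
    (fun q i => ⟨Idx.eq_of_mem_classOf hIm hJm hI0 hJ0 (hcl q), fun h => h ▸ hcl q⟩) π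
    (fun i => (hseries _).of_norm) (fun i => Rgen (p i) x y)
  rw [hbalance.tsum_eq, Idx.sum_univ] at hsplit
  simp only [classOf, piGen_singleton] at hsplit
  linear_combination -hsplit

/-- The fundamental functional equation: for any stationary distribution `π` of
the spatially homogeneous Markov chain on ℤ₊² described by the per-class jump
distributions `p`, and all `x, y ∈ ℂ` with `0 < |x| ≤ 1`, `0 < |y| ≤ 1`, all
the series converge absolutely and
`−R(x,y)·π(x,y) = Σ_{(k,ℓ)∈E} R^{(k,ℓ)}(x,y)·π_{k,ℓ}·x^k y^ℓ
  + Σ_{ℓ<J⁻} R^{S'_ℓ}(x,y)·π^{S'_ℓ}(x,y) + Σ_{k<I⁻} R^{S''_k}(x,y)·π^{S''_k}(x,y)`. -/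
theorem functional_equation (Im Jm I0 J0 : ℕ)
    (hIm : 1 ≤ Im) (hJm : 1 ≤ Jm) (hI0 : Im ≤ I0) (hJ0 : Jm ≤ J0)
    -- the jump distributions, one for each class
    (p : Idx Im Jm I0 J0 → ℤ × ℤ → ℝ)
    (hp0 : ∀ i m, 0 ≤ p i m) (hp1 : ∀ i m, p i m ≤ 1)
    (hpfin : ∀ i, (Function.support (p i)).Finite)
    (hpsum : ∀ i, HasSum (p i) 1)
    -- jumps from a state of a class stay in the quarter plane
    (hpres : ∀ i, ∀ q ∈ classOf Im Jm I0 J0 i, ∀ m : ℤ × ℤ, 0 < p i m →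
      0 ≤ (q.1 : ℤ) + m.1 ∧ 0 ≤ (q.2 : ℤ) + m.2)
    -- `cl q` is the homogeneity class containing the state `q`
    (cl : ℕ × ℕ → Idx Im Jm I0 J0) (hcl : ∀ q, q ∈ classOf Im Jm I0 J0 (cl q))
    -- the stationary distribution of the kernel `K(q,q') = p^{C(q)}(q' − q)`
    (π : ℕ × ℕ → ℝ) (hπ0 : ∀ q, 0 ≤ π q) (hπ1 : ∀ q, π q ≤ 1) (hπsum : HasSum π 1)
    (hstat : ∀ q' : ℕ × ℕ,
      HasSum (fun q : ℕ × ℕ => π q * p (cl q) (jumpOf q q')) (π q'))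
    (x y : ℂ) (hx0 : 0 < ‖x‖) (hx1 : ‖x‖ ≤ 1) (hy0 : 0 < ‖y‖) (hy1 : ‖y‖ ≤ 1) :
    -- absolute convergence of all the series involved
    (∀ i, Summable (fun m : ℤ × ℤ => ‖(p i m : ℂ) * x ^ m.1 * y ^ m.2‖)) ∧
    (∀ C : Set (ℕ × ℕ),
      Summable (fun q : ℕ × ℕ => ‖(if q ∈ C then (π q : ℂ) else 0) * x ^ q.1 * y ^ q.2‖)) ∧
    -- the functional equation
    -(Rgen (p (Sum.inl ())) x y) * piGen π (Sclass Im Jm) x y =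
      (∑ e ∈ (EFin Im Jm I0 J0).attach,
        Rgen (p (Sum.inr (Sum.inr (Sum.inr e)))) x y
          * ((π e.1 : ℂ) * x ^ (e.1.1 : ℕ) * y ^ (e.1.2 : ℕ)))
      + (∑ l : Fin Jm,
        Rgen (p (Sum.inr (Sum.inl l))) x y * piGen π (Shoriz Im I0 (l : ℕ)) x y)
      + (∑ k : Fin Im,
        Rgen (p (Sum.inr (Sum.inr (Sum.inl k)))) x y * piGen π (Svert Jm J0 (k : ℕ)) x y) :=
  functional_equation_general Im Jm I0 J0 hIm hJm hI0 hJ0 p hp0 hpfin hpsum hpres cl hcl π hπ0 hπsum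
    hstat x y hx0 hx1 hy0 hy1

end
end

section
/- Let p : {−1,0,1}×{−1,0,1} → ℝ satisfy p(i,j) ≥ 0 for all (i,j) and Σ_{i,j} p(i,j) = 1. Define the real polynomials b₂(y) = Σ_{j=−1}^{1} p(1,j)·y^{j+1}, b₁(y) = Σ_{j=−1}^{1} p(0,j)·y^{j+1} − y, b₀(y) = Σ_{j=−1}^{1} p(−1,j)·y^{j+1}, and the discriminant Δ(y) = b₁(y)² − 4·b₂(y)·b₀(y), a real polynomial of degree at most 4. If Δ is not the zero polynomial, then every complex root of Δ is real. -/
/-!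
If `Δ` had a non-real root `z`, then `Δ = q * r` with `q = (X - z)(X - z̄)` positive on `ℝ`
and `deg r ≤ 2`, so `r` has the sign of `Δ` at every real point. Now `Δ(±1) ≥ 0`, while
`Δ(t) = -4 b₂(t) b₀(t) ≤ 0` at every root `t ≥ 0` of `b₁`. Unless rows `±1` of `p` vanish,
`b₁(0) ≥ 0 > b₁(1)`, so `b₁` has a root `a ∈ [0, 1)`; and if the leading coefficient
`p(0,1)² - 4 p(1,1) p(-1,1)` of `Δ` is positive, then `p(0,1) > 0` and `b₁` also has a
root `b > 1`.
A quadratic that is `≥ 0` at `±1` and `≤ 0` at `a` vanishes identically if it is concave, and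
cannot be `≤ 0` at `b` if it is strictly convex. If rows `±1` vanish, then `Δ = b₁²` where
`b₁` has the real root `1`, so its other root is real as well.
-/

noncomputable section

open Polynomial

/-- `Σ_{j=−1}^{1} p(i,j)·y^{j+1}`, the generating polynomial of the row `i` of
the jump probabilities. -/
def bRow (p : ℤ × ℤ → ℝ) (i : ℤ) : Polynomial ℝ :=
  ∑ j ∈ Finset.range 3, Polynomial.C (p (i, (j : ℤ) - 1)) * Polynomial.X ^ j

/-- `b₂(y) = Σ_{j=−1}^{1} p(1,j)·y^{j+1}`. -/
def b2 (p : ℤ × ℤ → ℝ) : Polynomial ℝ := bRow p 1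

/-- `b₁(y) = Σ_{j=−1}^{1} p(0,j)·y^{j+1} − y`. -/
def b1 (p : ℤ × ℤ → ℝ) : Polynomial ℝ := bRow p 0 - Polynomial.X

/-- `b₀(y) = Σ_{j=−1}^{1} p(−1,j)·y^{j+1}`. -/
def b0 (p : ℤ × ℤ → ℝ) : Polynomial ℝ := bRow p (-1)

/-- The discriminant `Δ(y) = b₁(y)² − 4·b₂(y)·b₀(y)` of the kernel, a real
polynomial of degree at most `4`. -/
def Δdisc (p : ℤ × ℤ → ℝ) : Polynomial ℝ :=
  (b1 p) ^ 2 - 4 * (b2 p) * (b0 p)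

namespace Polynomial

theorem eval_eq_of_natDegree_le_two {r : ℝ[X]} (hr : r.natDegree ≤ 2) (x : ℝ) :
    r.eval x = r.coeff 0 + r.coeff 1 * x + r.coeff 2 * x ^ 2 := by
  rw [eval_eq_sum_range' (by omega : r.natDegree < 3)]
  simp only [Finset.sum_range_succ, Finset.sum_range_zero]
  ring

theorem sub_mul_eval_eq_of_natDegree_le_two {r : ℝ[X]} (hr : r.natDegree ≤ 2) (u t v : ℝ) :
    (v - u) * r.eval t =
      (v - t) * r.eval u + (t - u) * r.eval v - r.coeff 2 * (t - u) * (v - t) * (v - u) := by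
  simp only [eval_eq_of_natDegree_le_two hr]
  ring

theorem eq_zero_of_natDegree_le_two_of_sign_pattern {r : ℝ[X]} (hr : r.natDegree ≤ 2)
    {u a v : ℝ} (hua : u < a) (hav : a < v)
    (hu : 0 ≤ r.eval u) (ha : r.eval a ≤ 0) (hv : 0 ≤ r.eval v)
    (hb : 0 < r.coeff 2 → ∃ b, v < b ∧ r.eval b ≤ 0) : r = 0 := by
  have hau := sub_pos.2 hua
  have hva := sub_pos.2 hav
  rcases lt_or_ge 0 (r.coeff 2) with hpos | hnonpos
  · -- interpolation through `a < v < b` would force `r v < 0`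
    obtain ⟨b, hvb, hb⟩ := hb hpos
    have hbv := sub_pos.2 hvb
    have hba : 0 < b - a := by linarith
    have key := sub_mul_eval_eq_of_natDegree_le_two hr a v b
    nlinarith [mul_pos (mul_pos (mul_pos hpos hva) hbv) hba,
      mul_nonpos_of_nonneg_of_nonpos hbv.le ha, mul_nonpos_of_nonneg_of_nonpos hva.le hb,
      mul_nonneg hba.le hv]
  · -- interpolation through `u < a < v` writes `(v - u) * r a ≤ 0` as a sum of three
    -- nonnegative terms, so `r` vanishes at `u`, `a` and `v`
    have hvu : 0 < v - u := by linarith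
    have key := sub_mul_eval_eq_of_natDegree_le_two hr u a v
    have hu' := mul_nonneg hva.le hu
    have hv' := mul_nonneg hau.le hv
    have hcurv : 0 ≤ -r.coeff 2 * (a - u) * (v - a) * (v - u) := by
      have := neg_nonneg.2 hnonpos
      positivity
    have ha' := mul_nonpos_of_nonneg_of_nonpos hvu.le ha
    have hu0 : r.eval u = 0 := le_antisymm (nonpos_of_mul_nonpos_right (by linarith) hva) hu
    have hv0 : r.eval v = 0 := le_antisymm (nonpos_of_mul_nonpos_right (by linarith) hau) hv
    have ha0 : r.eval a = 0 := le_antisymm ha (nonneg_of_mul_nonneg_right (by linarith) hvu)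
    refine eq_zero_of_natDegree_lt_card_of_eval_eq_zero' r {u, a, v} ?_ ?_
    · simp only [Finset.mem_insert, Finset.mem_singleton]
      rintro x (rfl | rfl | rfl) <;> assumption
    · rw [Finset.card_insert_of_notMem (by
        simp only [Finset.mem_insert, Finset.mem_singleton]; rintro (h | h) <;> linarith),
        Finset.card_pair hav.ne]
      omega

theorem exists_eq_mul_of_aeval_eq_zero_im_ne_zero (f : ℝ[X]) {z : ℂ} (hz : aeval z f = 0)
    (him : z.im ≠ 0) :
    ∃ q r : ℝ[X], f = q * r ∧ q.natDegree = 2 ∧ q.coeff 2 = 1 ∧ ∀ t, 0 < q.eval t := by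
  obtain ⟨r, hr⟩ := quadratic_dvd_of_aeval_eq_zero_im_ne_zero f hz him
  refine ⟨_, r, hr, by compute_degree!, ?_, fun t => ?_⟩
  · simp only [coeff_add, coeff_sub, coeff_C_mul, coeff_X_pow, coeff_X, coeff_C]
    norm_num
  have hnorm : ‖z‖ ^ 2 = z.re ^ 2 + z.im ^ 2 := by
    rw [Complex.sq_norm, Complex.normSq_apply]; ring
  have : (X ^ 2 - C (2 * z.re) * X + C (‖z‖ ^ 2)).eval t = (t - z.re) ^ 2 + z.im ^ 2 := by
    simp only [eval_add, eval_sub, eval_mul, eval_pow, eval_C, eval_X, hnorm]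
    ring
  rw [this]
  positivity

theorem im_eq_zero_of_aeval_eq_zero_of_isRoot {g : ℝ[X]} (hg : g ≠ 0) (hdeg : g.natDegree ≤ 2)
    {x : ℝ} (hx : g.IsRoot x) {z : ℂ} (hz : aeval z g = 0) : z.im = 0 := by
  by_contra him
  obtain ⟨q, r, rfl, hq2, -, hq⟩ := exists_eq_mul_of_aeval_eq_zero_im_ne_zero g hz him
  have hr : r ≠ 0 := right_ne_zero_of_mul hg
  have hr0 : r.natDegree = 0 := by
    rw [natDegree_mul (left_ne_zero_of_mul hg) hr, hq2] at hdeg; omega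
  rw [eq_C_of_natDegree_eq_zero hr0] at hr hx
  simp only [IsRoot, eval_mul, eval_C, mul_eq_zero, (hq x).ne', false_or] at hx
  exact hr (by simp [hx])

theorem im_eq_zero_of_aeval_eq_zero_of_sign_pattern {f : ℝ[X]} (hf : f ≠ 0)
    (hdeg : f.natDegree ≤ 4) {u a v : ℝ} (hua : u < a) (hav : a < v)
    (hu : 0 ≤ f.eval u) (ha : f.eval a ≤ 0) (hv : 0 ≤ f.eval v)
    (hb : 0 < f.coeff 4 → ∃ b, v < b ∧ f.eval b ≤ 0) {z : ℂ} (hz : aeval z f = 0) :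
    z.im = 0 := by
  by_contra him
  obtain ⟨q, r, rfl, hq2, hq2', hq⟩ := exists_eq_mul_of_aeval_eq_zero_im_ne_zero f hz him
  have hr : r ≠ 0 := right_ne_zero_of_mul hf
  have hrdeg : r.natDegree ≤ 2 := by
    rw [natDegree_mul (left_ne_zero_of_mul hf) hr, hq2] at hdeg; omega
  have hcoeff : (q * r).coeff (2 + 2) = r.coeff 2 := by
    rw [coeff_mul_add_eq_of_natDegree_le hq2.le hrdeg, hq2', one_mul]
  simp only [eval_mul] at hu ha hv hb
  refine hr (eq_zero_of_natDegree_le_two_of_sign_pattern hrdeg hua hav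
    (nonneg_of_mul_nonneg_right hu (hq u)) (nonpos_of_mul_nonpos_right ha (hq a))
    (nonneg_of_mul_nonneg_right hv (hq v)) fun hr2 => ?_)
  obtain ⟨b, hvb, hb⟩ := hb (hcoeff ▸ hr2)
  exact ⟨b, hvb, nonpos_of_mul_nonpos_right hb (hq b)⟩

theorem exists_gt_isRoot_of_eval_neg {f : ℝ[X]} (hf : 0 < f.leadingCoeff) {x : ℝ}
    (hx : f.eval x < 0) : ∃ y, x < y ∧ f.IsRoot y := by
  have hdeg : 0 < f.degree := by
    by_contra! h
    rw [eq_C_of_degree_le_zero h, eval_C] at hx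
    rw [eq_C_of_degree_le_zero h, leadingCoeff_C] at hf
    exact hx.not_gt hf
  obtain ⟨y, hxy, hy⟩ := intermediate_value_Ici f.continuous.continuousOn
    (tendsto_atTop_of_leadingCoeff_nonneg f hdeg hf.le) (Set.mem_Ici.2 hx.le : f.eval x ≤ 0)
  exact ⟨y, lt_of_le_of_ne hxy (by rintro rfl; exact hx.ne hy), hy⟩

end Polynomial

section Kernel

variable {p : ℤ × ℤ → ℝ}

theorem bRow_eq (p : ℤ × ℤ → ℝ) (i : ℤ) :
    bRow p i = C (p (i, 1)) * X ^ 2 + C (p (i, 0)) * X + C (p (i, -1)) := by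
  norm_num [bRow, Finset.sum_range_succ]
  ring

theorem eval_bRow (i : ℤ) (t : ℝ) :
    (bRow p i).eval t = p (i, 1) * t ^ 2 + p (i, 0) * t + p (i, -1) := by
  simp [bRow_eq]

theorem b1_eq (p : ℤ × ℤ → ℝ) :
    b1 p = C (p (0, 1)) * X ^ 2 + C (p (0, 0) - 1) * X + C (p (0, -1)) := by
  rw [b1, bRow_eq, C_sub, C_1]
  ring

theorem eval_Δdisc (t : ℝ) :
    (Δdisc p).eval t = (b1 p).eval t ^ 2 - 4 * (b2 p).eval t * (b0 p).eval t := by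
  simp [Δdisc]

theorem natDegree_Δdisc_le : (Δdisc p).natDegree ≤ 4 := by
  rw [Δdisc, b1_eq, b2, b0, bRow_eq, bRow_eq]
  compute_degree

theorem natDegree_b1_le : (b1 p).natDegree ≤ 2 := by
  rw [b1_eq]
  exact natDegree_quadratic_le

theorem coeff_Δdisc_four :
    (Δdisc p).coeff 4 = p (0, 1) ^ 2 - 4 * p (1, 1) * p (-1, 1) := by
  have h2 : (4 * b2 p).natDegree ≤ 2 := by rw [b2, bRow_eq]; compute_degree
  have h0 : (b0 p).natDegree ≤ 2 := by rw [b0, bRow_eq]; exact natDegree_quadratic_le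
  rw [Δdisc, coeff_sub, pow_two, show 4 = 2 + 2 from rfl,
    coeff_mul_add_eq_of_natDegree_le natDegree_b1_le natDegree_b1_le,
    coeff_mul_add_eq_of_natDegree_le h2 h0]
  simp [b1_eq, b2, b0, bRow_eq, coeff_one]
  ring

section Row

variable {i : ℤ}

theorem eval_bRow_nonneg (hrow : ∀ j ∈ Finset.Icc (-1 : ℤ) 1, 0 ≤ p (i, j))
    {t : ℝ} (ht : 0 ≤ t) : 0 ≤ (bRow p i).eval t := by
  have := hrow 1 (by decide); have := hrow 0 (by decide); have := hrow (-1) (by decide)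
  rw [eval_bRow]; positivity

theorem abs_eval_bRow_neg_one_le (hrow : ∀ j ∈ Finset.Icc (-1 : ℤ) 1, 0 ≤ p (i, j)) :
    |(bRow p i).eval (-1)| ≤ (bRow p i).eval 1 := by
  have := hrow 1 (by decide); have := hrow 0 (by decide); have := hrow (-1) (by decide)
  rw [eval_bRow, eval_bRow, abs_le]; constructor <;> linarith

theorem bRow_eq_zero_of_eval_one_eq_zero (hrow : ∀ j ∈ Finset.Icc (-1 : ℤ) 1, 0 ≤ p (i, j))
    (h : (bRow p i).eval 1 = 0) : bRow p i = 0 := by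
  have := hrow 1 (by decide); have := hrow 0 (by decide); have := hrow (-1) (by decide)
  rw [eval_bRow] at h
  rw [bRow_eq, show p (i, 1) = 0 by linarith, show p (i, 0) = 0 by linarith,
    show p (i, -1) = 0 by linarith]
  simp

end Row

theorem sum_eval_bRow_one
    (hpsum : ∑ m ∈ (Finset.Icc (-1 : ℤ) 1) ×ˢ (Finset.Icc (-1 : ℤ) 1), p m = 1) :
    (b2 p).eval 1 + (bRow p 0).eval 1 + (b0 p).eval 1 = 1 := by
  rw [show Finset.Icc (-1 : ℤ) 1 = {-1, 0, 1} by decide, Finset.sum_product] at hpsum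
  simp only [b2, b0, eval_bRow]
  simp only [Int.reduceNeg, Finset.mem_insert, neg_eq_zero, one_ne_zero, Finset.mem_singleton,
    reduceCtorEq, or_self, not_false_eq_true, Finset.sum_insert, zero_ne_one,
    Finset.sum_singleton] at hpsum
  linarith

theorem eval_one_b1
    (hpsum : ∑ m ∈ (Finset.Icc (-1 : ℤ) 1) ×ˢ (Finset.Icc (-1 : ℤ) 1), p m = 1) :
    (b1 p).eval 1 = -((b2 p).eval 1 + (b0 p).eval 1) := by
  rw [b1, eval_sub, eval_X]
  linarith [sum_eval_bRow_one hpsum]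

theorem eval_one_Δdisc
    (hpsum : ∑ m ∈ (Finset.Icc (-1 : ℤ) 1) ×ˢ (Finset.Icc (-1 : ℤ) 1), p m = 1) :
    (Δdisc p).eval 1 = ((b2 p).eval 1 - (b0 p).eval 1) ^ 2 := by
  rw [eval_Δdisc, eval_one_b1 hpsum]
  ring

theorem eval_neg_one_Δdisc_nonneg
    (hrow : ∀ i ∈ Finset.Icc (-1 : ℤ) 1, ∀ j ∈ Finset.Icc (-1 : ℤ) 1, 0 ≤ p (i, j))
    (hpsum : ∑ m ∈ (Finset.Icc (-1 : ℤ) 1) ×ˢ (Finset.Icc (-1 : ℤ) 1), p m = 1) :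
    0 ≤ (Δdisc p).eval (-1) := by
  have h2 : |(b2 p).eval (-1)| ≤ (b2 p).eval 1 := abs_eval_bRow_neg_one_le (hrow 1 (by decide))
  have h1 := abs_eval_bRow_neg_one_le (hrow 0 (by decide))
  have h0 : |(b0 p).eval (-1)| ≤ (b0 p).eval 1 :=
    abs_eval_bRow_neg_one_le (hrow (-1) (by decide))
  have hsum := sum_eval_bRow_one hpsum
  set s2 := (b2 p).eval 1
  set s0 := (b0 p).eval 1
  have hb1 : s2 + s0 ≤ (b1 p).eval (-1) := by
    rw [b1, eval_sub, eval_X]; linarith [neg_abs_le ((bRow p 0).eval (-1))]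
  have hs2 : 0 ≤ s2 := (abs_nonneg _).trans h2
  have hs0 : 0 ≤ s0 := (abs_nonneg _).trans h0
  rw [eval_Δdisc, sub_nonneg]
  calc 4 * (b2 p).eval (-1) * (b0 p).eval (-1)
      ≤ 4 * (|(b2 p).eval (-1)| * |(b0 p).eval (-1)|) := by
        rw [mul_assoc, ← abs_mul]; gcongr; exact le_abs_self _
    _ ≤ 4 * (s2 * s0) := by gcongr
    _ ≤ (s2 + s0) ^ 2 := by nlinarith [sq_nonneg (s2 - s0)]
    _ ≤ (b1 p).eval (-1) ^ 2 := by gcongr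

theorem eval_Δdisc_nonpos_of_isRoot
    (hrow : ∀ i ∈ Finset.Icc (-1 : ℤ) 1, ∀ j ∈ Finset.Icc (-1 : ℤ) 1, 0 ≤ p (i, j))
    {t : ℝ} (ht : 0 ≤ t) (hroot : (b1 p).IsRoot t) : (Δdisc p).eval t ≤ 0 := by
  have h2 : 0 ≤ (b2 p).eval t := eval_bRow_nonneg (hrow 1 (by decide)) ht
  have h0 : 0 ≤ (b0 p).eval t := eval_bRow_nonneg (hrow (-1) (by decide)) ht
  rw [eval_Δdisc, hroot.eq_zero]
  nlinarith

theorem leadingCoeff_b1_pos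
    (hrow : ∀ i ∈ Finset.Icc (-1 : ℤ) 1, ∀ j ∈ Finset.Icc (-1 : ℤ) 1, 0 ≤ p (i, j))
    (h : 0 < (Δdisc p).coeff 4) : 0 < (b1 p).leadingCoeff := by
  have h1 := hrow 1 (by decide) 1 (by decide)
  have h0 := hrow (-1) (by decide) 1 (by decide)
  have hpos : 0 < p (0, 1) := by
    rw [coeff_Δdisc_four] at h
    nlinarith [hrow 0 (by decide) 1 (by decide), mul_nonneg h1 h0]
  rwa [b1_eq, leadingCoeff_quadratic hpos.ne']

end Kernel

/-- If `p(i,j) ≥ 0` for all `(i,j) ∈ {−1,0,1}²` and `Σ_{i,j} p(i,j) = 1`, and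
the discriminant `Δ = b₁² − 4 b₂ b₀` is not the zero polynomial, then every
complex root of `Δ` is real. -/
theorem discriminant_roots_are_real (p : ℤ × ℤ → ℝ)
    (hp0 : ∀ m ∈ (Finset.Icc (-1 : ℤ) 1) ×ˢ (Finset.Icc (-1 : ℤ) 1), 0 ≤ p m)
    (hpsum : ∑ m ∈ (Finset.Icc (-1 : ℤ) 1) ×ˢ (Finset.Icc (-1 : ℤ) 1), p m = 1)
    (hΔ : Δdisc p ≠ 0) :
    ∀ z : ℂ, (Polynomial.aeval z) (Δdisc p) = 0 → z.im = 0 := by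
  intro z hz
  have hrow : ∀ i ∈ Finset.Icc (-1 : ℤ) 1, ∀ j ∈ Finset.Icc (-1 : ℤ) 1, 0 ≤ p (i, j) :=
    fun i hi j hj => hp0 (i, j) (Finset.mem_product.2 ⟨hi, hj⟩)
  have hb2 : 0 ≤ (b2 p).eval 1 := eval_bRow_nonneg (hrow 1 (by decide)) zero_le_one
  have hb0 : 0 ≤ (b0 p).eval 1 := eval_bRow_nonneg (hrow (-1) (by decide)) zero_le_one
  have hb1 := eval_one_b1 hpsum
  rcases (add_nonneg hb2 hb0).eq_or_lt with hzero | hpos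
  · have hb2_eq : b2 p = 0 := bRow_eq_zero_of_eval_one_eq_zero (hrow 1 (by decide))
      (show (b2 p).eval 1 = 0 by linarith)
    have hΔb1 : Δdisc p = b1 p ^ 2 := by rw [Δdisc, hb2_eq]; ring
    rw [hΔb1] at hΔ hz
    refine im_eq_zero_of_aeval_eq_zero_of_isRoot (pow_ne_zero_iff two_ne_zero |>.1 hΔ)
      natDegree_b1_le (x := 1) (by rw [IsRoot, hb1, ← hzero, neg_zero]) ?_
    rwa [map_pow, pow_eq_zero_iff two_ne_zero] at hz
  · have hb1_at_zero : 0 ≤ (b1 p).eval 0 := by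
      simpa [b1_eq] using hrow 0 (by decide) (-1) (by decide)
    have hmem : (0 : ℝ) ∈ Set.Ioc ((b1 p).eval 1) ((b1 p).eval 0) := ⟨by linarith, hb1_at_zero⟩
    obtain ⟨a, ⟨ha0, ha1⟩, ha⟩ :=
      intermediate_value_Ico' zero_le_one (b1 p).continuous.continuousOn hmem
    refine im_eq_zero_of_aeval_eq_zero_of_sign_pattern hΔ natDegree_Δdisc_le
      (by linarith : (-1 : ℝ) < a) ha1 (eval_neg_one_Δdisc_nonneg hrow hpsum)
      (eval_Δdisc_nonpos_of_isRoot hrow ha0 ha) (eval_one_Δdisc hpsum ▸ sq_nonneg _)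
      (fun h4 => ?_) hz
    obtain ⟨b, hb, hroot⟩ := exists_gt_isRoot_of_eval_neg (leadingCoeff_b1_pos hrow h4)
      (by linarith : (b1 p).eval 1 < 0)
    exact ⟨b, hb, eval_Δdisc_nonpos_of_isRoot hrow (by linarith) hroot⟩

end
end

section
/- Under the stated assumptions (Łukasiewicz-type walk in the quarter plane with maximal negative jump 1 in each coordinate), for all complex numbers x, y with 0 < |x| ≤ 1 and 0 < |y| ≤ 1, all the series below converge absolutely and the functional equation −R(x,y)·π(x,y) = R^{(0,0)}(x,y)·π_{0,0} + R^{S'_0}(x,y)·π^{S'_0}(x,y) + R^{S''_0}(x,y)·π^{S''_0}(x,y) holds, i.e. the functional equation has the same form, with exactly two unknown one-variable generating functions, as in the small steps case. -/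
/-!
For a Łukasiewicz-type walk in the quarter plane (maximal negative jump `1` in
each coordinate, arbitrary bounded positive jumps of sizes at most `I⁺`, `J⁺`),
there are only four homogeneity classes: the interior `S = {i ≥ 1, j ≥ 1}`, the
horizontal axis `S'_0 = {(i,0) : i ≥ 1}`, the vertical axis
`S''_0 = {(0,j) : j ≥ 1}`, and the origin `{(0,0)}`. The functional equation
then has the same form as in the small steps case, with exactly two unknown
one-variable generating functions:
`−R(x,y)·π(x,y) = R^{(0,0)}(x,y)·π₀₀ + R^{S'_0}(x,y)·π^{S'_0}(x)
  + R^{S''_0}(x,y)·π^{S''_0}(y)`,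
valid for `0 < |x| ≤ 1`, `0 < |y| ≤ 1`, with all series absolutely convergent.
-/

noncomputable section
open scoped Classical

/-- The jump distribution used at state `q`: `pS` in the interior
`S = {i ≥ 1, j ≥ 1}`, `pH` on the horizontal axis `S'_0 = {(i,0) : i ≥ 1}`,
`pV` on the vertical axis `S''_0 = {(0,j) : j ≥ 1}`, and `pO` at the origin. -/
def pClass (pS pH pV pO : ℤ × ℤ → ℝ) (q : ℕ × ℕ) : ℤ × ℤ → ℝ :=
  if 1 ≤ q.1 ∧ 1 ≤ q.2 then pS else if 1 ≤ q.1 then pH else if 1 ≤ q.2 then pV else pO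

/-- `π(x,y) = Σ_{i≥1, j≥1} π(i,j)·x^i y^j`. -/
def piMain (π : ℕ × ℕ → ℝ) (x y : ℂ) : ℂ :=
  ∑' q : ℕ × ℕ, (if 1 ≤ q.1 ∧ 1 ≤ q.2 then (π q : ℂ) else 0) * x ^ q.1 * y ^ q.2

/-- `π^{S'_0}(x) = Σ_{i≥1} π(i,0)·x^i`. -/
def piH (π : ℕ × ℕ → ℝ) (x : ℂ) : ℂ :=
  ∑' i : ℕ, (if 1 ≤ i then (π (i, 0) : ℂ) else 0) * x ^ i

/-- `π^{S''_0}(y) = Σ_{j≥1} π(0,j)·y^j`. -/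
def piV (π : ℕ × ℕ → ℝ) (y : ℂ) : ℂ :=
  ∑' j : ℕ, (if 1 ≤ j then (π (0, j) : ℂ) else 0) * y ^ j

/-- The functional equation for Łukasiewicz-type walks in the quarter plane:
with maximal negative jump `1` in each coordinate, under stationarity, for
`0 < |x| ≤ 1` and `0 < |y| ≤ 1` all the series converge absolutely and
`−R(x,y)·π(x,y) = R^{(0,0)}(x,y)·π₀₀ + R^{S'_0}(x,y)·π^{S'_0}(x)
  + R^{S''_0}(x,y)·π^{S''_0}(y)`. -/
theorem functional_equation_lukasiewicz (Ip Jp : ℕ) (hIp : 1 ≤ Ip) (hJp : 1 ≤ Jp)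
    (pS pH pV pO : ℤ × ℤ → ℝ)
    -- each of the four jump laws is a probability distribution supported in
    -- `{−1,0,…,I⁺} × {−1,0,…,J⁺}`
    (hdist : ∀ r ∈ ({pS, pH, pV, pO} : Set (ℤ × ℤ → ℝ)),
      (∀ m, 0 ≤ r m) ∧ HasSum r 1 ∧
        (∀ m : ℤ × ℤ, r m ≠ 0 →
          -1 ≤ m.1 ∧ m.1 ≤ (Ip : ℤ) ∧ -1 ≤ m.2 ∧ m.2 ≤ (Jp : ℤ)))
    -- jumps from each class stay in the quarter plane
    (hH : ∀ m : ℤ × ℤ, pH m ≠ 0 → 0 ≤ m.2)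
    (hV : ∀ m : ℤ × ℤ, pV m ≠ 0 → 0 ≤ m.1)
    (hO : ∀ m : ℤ × ℤ, pO m ≠ 0 → 0 ≤ m.1 ∧ 0 ≤ m.2)
    -- the stationary distribution of the kernel `K(q,q') = p^{C(q)}(q' − q)`
    (π : ℕ × ℕ → ℝ) (hπ0 : ∀ q, 0 ≤ π q) (hπ1 : ∀ q, π q ≤ 1) (hπsum : HasSum π 1)
    (hstat : ∀ q' : ℕ × ℕ,
      HasSum (fun q : ℕ × ℕ => π q * pClass pS pH pV pO q (jumpOf q q')) (π q'))
    (x y : ℂ) (hx0 : 0 < ‖x‖) (hx1 : ‖x‖ ≤ 1) (hy0 : 0 < ‖y‖) (hy1 : ‖y‖ ≤ 1) :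
    -- absolute convergence of all the series involved
    (∀ r ∈ ({pS, pH, pV, pO} : Set (ℤ × ℤ → ℝ)),
      Summable (fun m : ℤ × ℤ => ‖(r m : ℂ) * x ^ m.1 * y ^ m.2‖)) ∧
    Summable
      (fun q : ℕ × ℕ => ‖(if 1 ≤ q.1 ∧ 1 ≤ q.2 then (π q : ℂ) else 0) * x ^ q.1 * y ^ q.2‖) ∧
    Summable (fun i : ℕ => ‖(if 1 ≤ i then (π (i, 0) : ℂ) else 0) * x ^ i‖) ∧
    Summable (fun j : ℕ => ‖(if 1 ≤ j then (π (0, j) : ℂ) else 0) * y ^ j‖) ∧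
    -- the functional equation, of the same form as in the small steps case
    -(Rgen pS x y) * piMain π x y =
      Rgen pO x y * (π (0, 0) : ℂ) + Rgen pH x y * piH π x + Rgen pV x y * piV π y := by
  have hx : x ≠ 0 := norm_pos_iff.mp hx0
  have hy : y ≠ 0 := norm_pos_iff.mp hy0
  set P : ℕ × ℕ → ℤ × ℤ → ℝ := pClass pS pH pV pO with hP
  set f : ℕ × ℕ → ℂ := fun q => x ^ q.1 * y ^ q.2 with hf
  have hfle : ∀ q : ℕ × ℕ, ‖f q‖ ≤ 1 := by
    intro q
    rw [hf]
    simp only [norm_mul, norm_pow]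
    exact mul_le_one₀ (pow_le_one₀ (norm_nonneg x) hx1)
      (pow_nonneg (norm_nonneg y) q.2) (pow_le_one₀ (norm_nonneg y) hy1)
  have hS := hdist pS (by simp)
  have hHd := hdist pH (by simp)
  have hVd := hdist pV (by simp)
  have hOd := hdist pO (by simp)
  -- properties of the class kernels
  have hPpos : ∀ q m, 0 ≤ P q m := by
    intro q m
    rw [hP, pClass]
    split_ifs
    exacts [hS.1 m, hHd.1 m, hVd.1 m, hOd.1 m]
  have hPsum : ∀ q, HasSum (P q) 1 := by
    intro q
    rw [hP, pClass]
    split_ifs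
    exacts [hS.2.1, hHd.2.1, hVd.2.1, hOd.2.1]
  have hPbox : ∀ q m, P q m ≠ 0 →
      -1 ≤ m.1 ∧ m.1 ≤ (Ip : ℤ) ∧ -1 ≤ m.2 ∧ m.2 ≤ (Jp : ℤ) := by
    intro q m
    rw [hP, pClass]
    split_ifs
    exacts [hS.2.2 m, hHd.2.2 m, hVd.2.2 m, hOd.2.2 m]
  have hstay : ∀ q m, P q m ≠ 0 → 0 ≤ (q.1 : ℤ) + m.1 ∧ 0 ≤ (q.2 : ℤ) + m.2 := by
    intro q m
    rw [hP, pClass]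
    split_ifs with h1 h2 h3
    · intro hm
      have := hS.2.2 m hm
      omega
    · intro hm
      have h2' := hH m hm
      have := hHd.2.2 m hm
      omega
    · intro hm
      have h3' := hV m hm
      have := hVd.2.2 m hm
      omega
    · intro hm
      have := hO m hm
      omega
  -- summability of the finitely-supported jump series
  have hpsum : ∀ r ∈ ({pS, pH, pV, pO} : Set (ℤ × ℤ → ℝ)),
      Summable (fun m : ℤ × ℤ => ‖(r m : ℂ) * x ^ m.1 * y ^ m.2‖) := by
    intro r hr
    apply summable_of_ne_finset_zero
      (s := Finset.Icc ((-1, -1) : ℤ × ℤ) ((Ip : ℤ), (Jp : ℤ)))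
    intro m hm
    have : r m = 0 := by
      by_contra hmne
      have hbox := (hdist r hr).2.2 m hmne
      apply hm
      rw [Finset.mem_Icc]
      constructor
      · exact ⟨hbox.1, hbox.2.2.1⟩
      · exact ⟨hbox.2.1, hbox.2.2.2⟩
    simp [this]
  -- summability of π-weighted series
  have hπS : Summable π := hπsum.summable
  have domsum : ∀ g : ℕ × ℕ → ℂ, (∀ q, ‖g q‖ ≤ π q) → Summable (fun q => ‖g q‖) :=
    fun g hg => Summable.of_nonneg_of_le (fun q => norm_nonneg _) hg hπS
  have hmain : Summable (fun q : ℕ × ℕ =>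
      ‖(if 1 ≤ q.1 ∧ 1 ≤ q.2 then (π q : ℂ) else 0) * x ^ q.1 * y ^ q.2‖) := by
    apply domsum
    intro q
    split_ifs with hq
    · calc ‖(π q : ℂ) * x ^ q.1 * y ^ q.2‖ = π q * ‖f q‖ := by
            rw [hf]
            simp [abs_of_nonneg (hπ0 q), mul_assoc]
        _ ≤ π q * 1 := mul_le_mul_of_nonneg_left (hfle q) (hπ0 q)
        _ = π q := mul_one _
    · simpa using hπ0 q
  have hHax : Summable (fun i : ℕ => ‖(if 1 ≤ i then (π (i, 0) : ℂ) else 0) * x ^ i‖) := by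
    have hsub : Summable (fun i : ℕ => π (i, 0)) :=
      hπS.comp_injective (i := fun i : ℕ => (i, 0)) (fun a b hab => by
        simpa [Prod.ext_iff] using hab)
    apply Summable.of_nonneg_of_le (fun i => norm_nonneg _) _ hsub
    intro i
    split_ifs with hi
    · calc ‖(π (i, 0) : ℂ) * x ^ i‖ = π (i, 0) * ‖x‖ ^ i := by
            simp [abs_of_nonneg (hπ0 (i, 0))]
        _ ≤ π (i, 0) * 1 :=
            mul_le_mul_of_nonneg_left (pow_le_one₀ (norm_nonneg x) hx1) (hπ0 (i, 0))
        _ = π (i, 0) := mul_one _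
    · simpa using hπ0 (i, 0)
  have hVax : Summable (fun j : ℕ => ‖(if 1 ≤ j then (π (0, j) : ℂ) else 0) * y ^ j‖) := by
    have hsub : Summable (fun j : ℕ => π (0, j)) :=
      hπS.comp_injective (i := fun j : ℕ => (0, j)) (fun a b hab => by
        simpa [Prod.ext_iff] using hab)
    apply Summable.of_nonneg_of_le (fun j => norm_nonneg _) _ hsub
    intro j
    split_ifs with hj
    · calc ‖(π (0, j) : ℂ) * y ^ j‖ = π (0, j) * ‖y‖ ^ j := by
            simp [abs_of_nonneg (hπ0 (0, j))]
        _ ≤ π (0, j) * 1 :=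
            mul_le_mul_of_nonneg_left (pow_le_one₀ (norm_nonneg y) hy1) (hπ0 (0, j))
        _ = π (0, j) := mul_one _
    · simpa using hπ0 (0, j)
  refine ⟨hpsum, hmain, hHax, hVax, ?_⟩
  -- the double family
  set h : ℕ × ℕ → ℕ × ℕ → ℂ :=
    fun q q' => ((π q * P q (jumpOf q q') : ℝ) : ℂ) * f q' with hh
  have einj : ∀ q : ℕ × ℕ, Function.Injective (fun q' : ℕ × ℕ => jumpOf q q') := by
    intro q a b hab
    simp only [jumpOf, Prod.mk.injEq] at hab
    have h1 : a.1 = b.1 := by omega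
    have h2 : a.2 = b.2 := by omega
    exact Prod.ext h1 h2
  -- summability of the double family
  have hDpos : ∀ p : (ℕ × ℕ) × (ℕ × ℕ), 0 ≤ π p.1 * P p.1 (jumpOf p.1 p.2) :=
    fun p => mul_nonneg (hπ0 p.1) (hPpos _ _)
  have hDslice : ∀ q : ℕ × ℕ, Summable (fun q' => π q * P q (jumpOf q q')) := by
    intro q
    exact (((hPsum q).summable.comp_injective (einj q)).mul_left (π q))
  have hDslice_le : ∀ q : ℕ × ℕ, ∑' q', π q * P q (jumpOf q q') ≤ π q := by
    intro q
    rw [tsum_mul_left]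
    calc π q * ∑' q', P q (jumpOf q q')
        ≤ π q * 1 := by
          apply mul_le_mul_of_nonneg_left _ (hπ0 q)
          rw [← (hPsum q).tsum_eq]
          exact Summable.tsum_le_tsum_of_inj _ (einj q) (fun c _ => hPpos q c) (fun b => le_rfl)
            ((hPsum q).summable.comp_injective (einj q)) (hPsum q).summable
      _ = π q := mul_one _
  have hD : Summable (fun p : (ℕ × ℕ) × (ℕ × ℕ) => π p.1 * P p.1 (jumpOf p.1 p.2)) := by
    rw [summable_prod_of_nonneg hDpos]
    refine ⟨hDslice, ?_⟩
    exact Summable.of_nonneg_of_le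
      (fun q => tsum_nonneg (fun q' => hDpos (q, q'))) hDslice_le hπS
  have hHnorm : Summable (fun p : (ℕ × ℕ) × (ℕ × ℕ) => ‖h p.1 p.2‖) := by
    apply Summable.of_nonneg_of_le (fun p => norm_nonneg _) _ hD
    intro p
    rw [hh]
    calc ‖((π p.1 * P p.1 (jumpOf p.1 p.2) : ℝ) : ℂ) * f p.2‖
        = (π p.1 * P p.1 (jumpOf p.1 p.2)) * ‖f p.2‖ := by
          rw [norm_mul, Complex.norm_real, Real.norm_of_nonneg (hDpos p)]
      _ ≤ (π p.1 * P p.1 (jumpOf p.1 p.2)) * 1 :=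
          mul_le_mul_of_nonneg_left (hfle p.2) (hDpos p)
      _ = _ := mul_one _
  have hHsum : Summable (Function.uncurry h) := by
    apply Summable.of_norm
    exact hHnorm
  -- columns: stationarity
  have col : ∀ q' : ℕ × ℕ, ∑' q, h q q' = (π q' : ℂ) * f q' := by
    intro q'
    have := (Complex.hasSum_ofReal.mpr (hstat q')).mul_right (f q')
    exact this.tsum_eq
  -- rows: generating-function identity
  have pow_shift : ∀ (z : ℂ), z ≠ 0 → ∀ (a b : ℕ), (z : ℂ) ^ b = z ^ a * z ^ ((b : ℤ) - a) := by
    intro z hz a b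
    rw [← zpow_natCast z b, ← zpow_natCast z a, ← zpow_add₀ hz]
    congr 1
    ring
  have row : ∀ q : ℕ × ℕ, ∑' q', h q q' =
      (π q : ℂ) * f q * (1 + Rgen (P q) x y) := by
    intro q
    set G : ℤ × ℤ → ℂ := fun m => (P q m : ℂ) * x ^ m.1 * y ^ m.2 with hG
    have hpt : ∀ q' : ℕ × ℕ, h q q' = ((π q : ℂ) * f q) * G (jumpOf q q') := by
      intro q'
      rw [hh, hG, hf]
      simp only [jumpOf]
      push_cast
      rw [pow_shift x hx q.1 q'.1, pow_shift y hy q.2 q'.2]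
      ring
    have hsupp : Function.support G ⊆ Set.range (fun q' : ℕ × ℕ => jumpOf q q') := by
      intro m hm
      have hPm : P q m ≠ 0 := by
        intro h0
        apply hm
        rw [hG]
        simp [h0]
      obtain ⟨h1, h2⟩ := hstay q m hPm
      refine ⟨(((q.1 : ℤ) + m.1).toNat, ((q.2 : ℤ) + m.2).toNat), ?_⟩
      simp only [jumpOf]
      have e1 : ((((q.1 : ℤ) + m.1).toNat : ℤ)) = (q.1 : ℤ) + m.1 := Int.toNat_of_nonneg h1
      have e2 : ((((q.2 : ℤ) + m.2).toNat : ℤ)) = (q.2 : ℤ) + m.2 := Int.toNat_of_nonneg h2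
      rw [e1, e2]
      simp [Prod.ext_iff]
    calc ∑' q', h q q' = ∑' q', ((π q : ℂ) * f q) * G (jumpOf q q') := tsum_congr hpt
      _ = ((π q : ℂ) * f q) * ∑' q', G (jumpOf q q') := tsum_mul_left
      _ = ((π q : ℂ) * f q) * ∑' m, G m := by rw [(einj q).tsum_eq hsupp]
      _ = (π q : ℂ) * f q * (1 + Rgen (P q) x y) := by
          rw [Rgen, hG]
          ring_nf
  -- Fubini
  have fub : ∑' (q' : ℕ × ℕ) (q : ℕ × ℕ), h q q' = ∑' (q : ℕ × ℕ) (q' : ℕ × ℕ), h q q' :=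
    Summable.tsum_comm hHsum
  set Pi : ℂ := ∑' q' : ℕ × ℕ, (π q' : ℂ) * f q' with hPi
  have key : Pi = ∑' q : ℕ × ℕ, (π q : ℂ) * f q * (1 + Rgen (P q) x y) := by
    rw [hPi]
    calc ∑' q', (π q' : ℂ) * f q' = ∑' (q' : ℕ × ℕ) (q : ℕ × ℕ), h q q' :=
          tsum_congr (fun q' => (col q').symm)
      _ = ∑' (q : ℕ × ℕ) (q' : ℕ × ℕ), h q q' := fub
      _ = ∑' q, (π q : ℂ) * f q * (1 + Rgen (P q) x y) := tsum_congr row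
  -- bound on the generating functions
  set M : ℝ := max (max ‖Rgen pS x y‖ ‖Rgen pH x y‖) (max ‖Rgen pV x y‖ ‖Rgen pO x y‖) with hM
  have hRM : ∀ q, ‖Rgen (P q) x y‖ ≤ M := by
    intro q
    rw [hP, pClass]
    split_ifs
    · exact le_max_of_le_left (le_max_left _ _)
    · exact le_max_of_le_left (le_max_right _ _)
    · exact le_max_of_le_right (le_max_left _ _)
    · exact le_max_of_le_right (le_max_right _ _)
  have hwnorm : ∀ q : ℕ × ℕ, ‖(π q : ℂ) * f q‖ ≤ π q := by
    intro q
    rw [norm_mul, Complex.norm_real, Real.norm_of_nonneg (hπ0 q)]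
    calc π q * ‖f q‖ ≤ π q * 1 := mul_le_mul_of_nonneg_left (hfle q) (hπ0 q)
      _ = π q := mul_one _
  have hwsum : Summable (fun q : ℕ × ℕ => (π q : ℂ) * f q) :=
    Summable.of_norm (domsum _ hwnorm)
  have husum : Summable (fun q : ℕ × ℕ => (π q : ℂ) * f q * Rgen (P q) x y) := by
    apply Summable.of_norm
    apply Summable.of_nonneg_of_le (fun q => norm_nonneg _) _ (hπS.mul_right M)
    intro q
    rw [norm_mul]
    apply mul_le_mul (hwnorm q) (hRM q) (norm_nonneg _) (hπ0 q)
  have hPival : Pi = ∑' q' : ℕ × ℕ, (π q' : ℂ) * f q' := rfl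
  have split : Pi = Pi + ∑' q : ℕ × ℕ, (π q : ℂ) * f q * Rgen (P q) x y := by
    have hcg : ∀ q : ℕ × ℕ, (π q : ℂ) * f q * (1 + Rgen (P q) x y) =
        (π q : ℂ) * f q + (π q : ℂ) * f q * Rgen (P q) x y := fun q => by ring
    conv_lhs => rw [key]
    rw [tsum_congr hcg, Summable.tsum_add hwsum husum, hPi]
  have hzero : ∑' q : ℕ × ℕ, (π q : ℂ) * f q * Rgen (P q) x y = 0 :=
    (left_eq_add.mp split)
  -- decompose over the four classes
  set uS : ℕ × ℕ → ℂ := fun q =>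
    ((if 1 ≤ q.1 ∧ 1 ≤ q.2 then (π q : ℂ) else 0) * x ^ q.1 * y ^ q.2) * Rgen pS x y with huS
  set uH : ℕ × ℕ → ℂ := fun q =>
    ((if 1 ≤ q.1 ∧ ¬ 1 ≤ q.2 then (π q : ℂ) else 0) * x ^ q.1 * y ^ q.2) * Rgen pH x y with huH
  set uV : ℕ × ℕ → ℂ := fun q =>
    ((if ¬ 1 ≤ q.1 ∧ 1 ≤ q.2 then (π q : ℂ) else 0) * x ^ q.1 * y ^ q.2) * Rgen pV x y with huV
  set uO : ℕ × ℕ → ℂ := fun q =>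
    ((if ¬ 1 ≤ q.1 ∧ ¬ 1 ≤ q.2 then (π q : ℂ) else 0) * x ^ q.1 * y ^ q.2) * Rgen pO x y
    with huO
  have hdecomp : ∀ q : ℕ × ℕ, (π q : ℂ) * f q * Rgen (P q) x y =
      uS q + uH q + uV q + uO q := by
    intro q
    rw [hP, pClass, huS, huH, huV, huO, hf]
    by_cases h1 : 1 ≤ q.1 <;> by_cases h2 : 1 ≤ q.2 <;>
      simp only [h1, h2, and_true, and_false, true_and, false_and, not_true, not_false_iff,
        if_true, if_false, and_self, not_false_eq_true] <;> ring
  -- summability of each class piece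
  have gensum : ∀ (c : ℕ × ℕ → Prop) [DecidablePred c] (R : ℂ), Summable
      (fun q : ℕ × ℕ => ((if c q then (π q : ℂ) else 0) * x ^ q.1 * y ^ q.2) * R) := by
    intro c _ R
    apply Summable.of_norm
    apply Summable.of_nonneg_of_le (fun q => norm_nonneg _) _ (hπS.mul_right ‖R‖)
    intro q
    rw [norm_mul]
    apply mul_le_mul _ le_rfl (norm_nonneg _) (hπ0 q)
    split_ifs with hq
    · calc ‖(π q : ℂ) * x ^ q.1 * y ^ q.2‖ = π q * ‖f q‖ := by
            rw [hf]
            simp [abs_of_nonneg (hπ0 q), mul_assoc]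
        _ ≤ π q * 1 := mul_le_mul_of_nonneg_left (hfle q) (hπ0 q)
        _ = π q := mul_one _
    · simpa using hπ0 q
  have hsS : Summable uS := by rw [huS]; exact gensum _ _
  have hsH : Summable uH := by rw [huH]; exact gensum _ _
  have hsV : Summable uV := by rw [huV]; exact gensum _ _
  have hsO : Summable uO := by rw [huO]; exact gensum _ _
  have hsplit4 : ∑' q : ℕ × ℕ, (π q : ℂ) * f q * Rgen (P q) x y =
      (∑' q, uS q) + (∑' q, uH q) + (∑' q, uV q) + (∑' q, uO q) := by
    rw [tsum_congr hdecomp, Summable.tsum_add (((hsS.add hsH).add hsV)) hsO,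
      Summable.tsum_add (hsS.add hsH) hsV, Summable.tsum_add hsS hsH]
  -- identify the four pieces
  have eS : ∑' q, uS q = piMain π x y * Rgen pS x y := by
    rw [huS, tsum_mul_right, piMain]
  have eH : ∑' q, uH q = piH π x * Rgen pH x y := by
    have hinj : Function.Injective (fun i : ℕ => ((i, 0) : ℕ × ℕ)) := fun a b hab => by
      simpa [Prod.ext_iff] using hab
    have hsupp : Function.support uH ⊆ Set.range (fun i : ℕ => ((i, 0) : ℕ × ℕ)) := by
      intro q hq
      rcases Nat.eq_zero_or_pos q.2 with h0 | hpos
      · exact ⟨q.1, by simp [Prod.ext_iff, h0.symm]⟩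
      · exfalso
        apply hq
        rw [huH]
        simp [Nat.one_le_iff_ne_zero.mpr (Nat.pos_iff_ne_zero.mp hpos)]
    rw [← hinj.tsum_eq hsupp, huH, piH, ← tsum_mul_right]
    exact tsum_congr fun i => by norm_num
  have eV : ∑' q, uV q = piV π y * Rgen pV x y := by
    have hinj : Function.Injective (fun j : ℕ => ((0, j) : ℕ × ℕ)) := fun a b hab => by
      simpa [Prod.ext_iff] using hab
    have hsupp : Function.support uV ⊆ Set.range (fun j : ℕ => ((0, j) : ℕ × ℕ)) := by
      intro q hq
      rcases Nat.eq_zero_or_pos q.1 with h0 | hpos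
      · exact ⟨q.2, by simp [Prod.ext_iff, h0.symm]⟩
      · exfalso
        apply hq
        rw [huV]
        simp [Nat.one_le_iff_ne_zero.mpr (Nat.pos_iff_ne_zero.mp hpos)]
    rw [← hinj.tsum_eq hsupp, huV, piV, ← tsum_mul_right]
    exact tsum_congr fun j => by norm_num
  have eO : ∑' q, uO q = (π (0, 0) : ℂ) * Rgen pO x y := by
    rw [huO]
    rw [tsum_eq_single ((0, 0) : ℕ × ℕ)]
    · simp
    · intro q hq
      have : 1 ≤ q.1 ∨ 1 ≤ q.2 := by
        by_contra hcon
        push_neg at hcon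
        apply hq
        have : q.1 = 0 := by omega
        have h2 : q.2 = 0 := by omega
        exact Prod.ext this h2
      rcases this with h | h <;> simp [h]
  rw [hsplit4, eS, eH, eV, eO] at hzero
  linear_combination -hzero

end
end
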